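/- Let Q be a poset with finite downsets and let P ⊆ Q be an initial scaffold of Q. Then the inclusion P ↪ Q is an initial functor; that is, for every q ∈ Q, the subposet {p ∈ P : p ≤ q in Q} with the relations of P is connected. -/

import Mathlib

/-- A single comparability step within `S` with respect to the relation `r`. -/
def StepIn {α : Type*} (S : Set α) (r : α → α → Prop) (x y : α) : Prop :=
  x ∈ S ∧ y ∈ S ∧ (r x y ∨ r y x)

/-- Connectivity of the set `S` equipped with the relation `r`: `S` is nonempty and any
two elements of `S` are joined by a finite zigzag of `r`-steps within `S`. -/
def ConnIn {α : Type*} (S : Set α) (r : α → α → Prop) : Prop :=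
  S.Nonempty ∧ ∀ a ∈ S, ∀ b ∈ S, Relation.ReflTransGen (StepIn S r) a b

/-- Connectivity of a subset of a poset, as a subposet (zigzags of comparabilities). -/
def PosetConn {α : Type*} [LE α] (S : Set α) : Prop := ConnIn S (· ≤ ·)

/-- `a` and `b` lie in `S` in the same connected component of the subposet `S`. -/
def SameComp {α : Type*} [LE α] (S : Set α) (a b : α) : Prop :=
  a ∈ S ∧ b ∈ S ∧ Relation.ReflTransGen (StepIn S (· ≤ ·)) a b

/-- An initial scaffold of the poset `α`: a subposet whose elements are exactly the
elements with disconnected (possibly empty) strict downset, and whose non-identity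
relations `r` consist, for each such element `b` and each connected component of the
strict downset of `b`, of exactly one relation `m < b` with `m` a minimum of `α` in
that component. -/
def IsScaffold {α : Type*} [PartialOrder α] (P : Set α) (r : α → α → Prop) : Prop :=
  P = {q | ¬ PosetConn (Set.Iio q)} ∧
  (∀ a b, r a b → IsMin a ∧ a < b ∧ b ∈ P) ∧
  (∀ b ∈ P, ∀ x ∈ Set.Iio b, ∃! m, r m b ∧ SameComp (Set.Iio b) m x)

/-!
Induct on `q` along the well-founded order `<`, writing `P≤q` for `P ∩ Iic q`. For `x < q` the
set `P≤x` is connected and contained in `P≤q`, and `P≤x ⊆ P≤y` whenever `x ≤ y`; hence any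
zigzag of comparabilities in the strict downset of `q` can be lifted to a zigzag in `P≤q`.
If `q ∉ P`, the strict downset of `q` is connected and contains every element of `P≤q`, so
this already connects `P≤q`. If `q ∈ P`, every `a < q` in `P` lies in the component of
`Iio q` of some minimum `m` with `r m q`, so `a` is joined to `m` and then to `q`.
-/

open Set Relation

variable {α : Type*}

section StepIn

variable {S T : Set α} {r : α → α → Prop}

instance StepIn.instSymm : Std.Symm (StepIn S r) where
  symm _ _ h := ⟨h.2.1, h.1, h.2.2.symm⟩

theorem StepIn.mono_set (hST : S ⊆ T) {a b : α} (h : StepIn S r a b) : StepIn T r a b :=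
  ⟨hST h.1, hST h.2.1, h.2.2⟩

theorem reflTransGen_stepIn_mono_set (hST : S ⊆ T) {a b : α}
    (h : ReflTransGen (StepIn S r) a b) : ReflTransGen (StepIn T r) a b :=
  ReflTransGen.mono (fun _ _ ↦ StepIn.mono_set hST) a b h

theorem connIn_of_forall_reflTransGen {c : α} (hc : c ∈ S)
    (h : ∀ a ∈ S, ReflTransGen (StepIn S r) a c) : ConnIn S r :=
  ⟨⟨c, hc⟩, fun a ha b hb ↦ (h a ha).trans (symm (h b hb))⟩

end StepIn

theorem wellFoundedLT_of_finite_Iic [Preorder α] (h : ∀ a : α, (Iic a).Finite) :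
    WellFoundedLT α :=
  ⟨(measure fun a ↦ (Iic a).ncard).wf.mono fun _ b hab ↦
    ncard_lt_ncard (Iic_ssubset_Iic.2 hab) (h b)⟩

section Zigzag

variable [PartialOrder α] {P : Set α} {r : α → α → Prop} {q : α}

theorem reflTransGen_of_le_of_lt (ih : ∀ x < q, ConnIn (P ∩ Iic x) r) {x y a b : α}
    (hxy : x ≤ y) (hyq : y < q) (ha : a ∈ P ∩ Iic x) (hb : b ∈ P ∩ Iic y) :
    ReflTransGen (StepIn (P ∩ Iic q) r) a b :=
  reflTransGen_stepIn_mono_set (inter_subset_inter_right P (Iic_subset_Iic.2 hyq.le))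
    ((ih y hyq).2 a ⟨ha.1, ha.2.trans hxy⟩ b hb)

theorem reflTransGen_of_zigzag_Iio (ih : ∀ x < q, ConnIn (P ∩ Iic x) r) {x y : α}
    (hxy : ReflTransGen (StepIn (Iio q) (· ≤ ·)) x y) (hxq : x < q) {a b : α}
    (ha : a ∈ P ∩ Iic x) (hb : b ∈ P ∩ Iic y) :
    ReflTransGen (StepIn (P ∩ Iic q) r) a b := by
  induction hxy generalizing b with
  | refl => exact reflTransGen_of_le_of_lt ih le_rfl hxq ha hb
  | tail _ hyz ihy =>
    obtain ⟨hyq, hzq, hle⟩ := hyz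
    obtain ⟨c, hc⟩ := (ih _ hyq).1
    refine (ihy hc).trans ?_
    rcases hle with hyz | hzy
    · exact reflTransGen_of_le_of_lt ih hyz hzq hc hb
    · exact symm (reflTransGen_of_le_of_lt ih hzy hyq hb hc)

end Zigzag

namespace IsScaffold

variable [PartialOrder α] {P : Set α} {r : α → α → Prop}

theorem mem_of_isMin (hP : IsScaffold P r) {m : α} (hm : IsMin m) : m ∈ P := by
  rw [hP.1]
  rintro ⟨⟨x, hx⟩, -⟩
  exact hm.not_lt hx

theorem inter_Iic_nonempty [WellFoundedLT α] (hP : IsScaffold P r) (x : α) :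
    (P ∩ Iic x).Nonempty := by
  obtain ⟨m, hmx, hm⟩ := exists_minimal_le_of_wellFoundedLT (fun _ ↦ True) x trivial
  exact ⟨m, hP.mem_of_isMin (minimal_true.1 hm), hmx⟩

theorem connIn_inter_Iic_of_forall_lt [WellFoundedLT α] (hP : IsScaffold P r) {q : α}
    (ih : ∀ x < q, ConnIn (P ∩ Iic x) r) : ConnIn (P ∩ Iic q) r := by
  by_cases hqP : q ∈ P
  · refine connIn_of_forall_reflTransGen ⟨hqP, le_rfl⟩ fun a ha ↦ ?_
    obtain rfl | haq := ha.2.eq_or_lt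
    · rfl
    obtain ⟨m, ⟨hmq, hmI, -, hma⟩, -⟩ := hP.2.2 q hqP a haq
    have hmP : m ∈ P := hP.mem_of_isMin (hP.2.1 m q hmq).1
    have ham : ReflTransGen (StepIn (P ∩ Iic q) r) a m :=
      symm (reflTransGen_of_zigzag_Iio ih hma hmI ⟨hmP, le_rfl⟩ ⟨ha.1, le_rfl⟩)
    exact ham.tail ⟨⟨hmP, hmI.le⟩, ⟨hqP, le_rfl⟩, Or.inl hmq⟩
  · have hconn : PosetConn (Iio q) := by simpa [hP.1] using hqP
    have hlt : ∀ a ∈ P ∩ Iic q, a < q := fun a ha ↦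
      ha.2.lt_of_ne fun h ↦ hqP (h ▸ ha.1)
    refine ⟨hP.inter_Iic_nonempty q, fun a ha b hb ↦ ?_⟩
    exact reflTransGen_of_zigzag_Iio ih (hconn.2 a (hlt a ha) b (hlt b hb)) (hlt a ha)
      ⟨ha.1, le_rfl⟩ ⟨hb.1, le_rfl⟩

theorem connIn_inter_Iic [WellFoundedLT α] (hP : IsScaffold P r) (q : α) :
    ConnIn (P ∩ Iic q) r :=
  WellFoundedLT.induction q fun _ ih ↦ hP.connIn_inter_Iic_of_forall_lt ih

end IsScaffold

/-- If `Q` is a poset with finite downsets and `(P, r)` is an initial scaffold of `Q`,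
then the inclusion `P ↪ Q` is an initial functor: for every `q : Q`, the subposet
`{p ∈ P | p ≤ q}` with the relations of `P` is connected. -/
theorem stmt5 {Q : Type} [PartialOrder Q] (hfin : ∀ q : Q, (Set.Iic q).Finite)
    (P : Set Q) (r : Q → Q → Prop) (hP : IsScaffold P r) :
    ∀ q : Q, ConnIn {p | p ∈ P ∧ p ≤ q} r :=
  have := wellFoundedLT_of_finite_Iic hfin
  hP.connIn_inter_Iic
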